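/- Let λ ∈ (0,1) and t > 0 with λ^t ≤ 1/2, and let m be the (t, log ψ(t))-conformal Borel probability measure on (0,1] with m(W_k) = (1−λ^t)·λ^{t(k−1)} for all k ≥ 1, where ψ(t) = (1−λ)^t/(1−λ^t). Then m is conservative for F_λ: every wandering Borel set has m-measure zero. -/

import Mathlib

open MeasureTheory Set Filter Topology

/-- The Markov partition interval `W n = (lam^n, lam^(n-1)]` for `n ≥ 1`. -/
noncomputable def Wint (lam : ℝ) (n : ℕ) : Set ℝ := Set.Ioc (lam ^ n) (lam ^ (n - 1))

/-- The map `F_lam : (0,1] → (0,1]`, extended by the identity outside `(0,1]`.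
On `W n` it is `x ↦ (x - lam^n)/(lam(1-lam))` for `n ≥ 2` and
`x ↦ (x - lam)/(1-lam)` on `W 1`; for `x ∈ (0,1]` the branch index is
the least `n` with `lam^n < x`. -/
noncomputable def Flam (lam : ℝ) (x : ℝ) : ℝ :=
  if 0 < x ∧ x ≤ 1 then
    if sInf {n : ℕ | lam ^ n < x} = 1 then (x - lam) / (1 - lam)
    else (x - lam ^ sInf {n : ℕ | lam ^ n < x}) / (lam * (1 - lam))
  else x

/-- The slope of `F_lam` on the branch `W n`. -/
noncomputable def slopeW (lam : ℝ) (n : ℕ) : ℝ :=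
  if n = 1 then 1 / (1 - lam) else 1 / (lam * (1 - lam))

/-- A Borel measure `m` on `(0,1]` is `(t,p)`-conformal for `F_lam` if for every
branch `W n` and every Borel `A ⊆ W n` one has `m(F_lam(A)) = e^p * s_n^t * m(A)`. -/
def IsConformal (lam t p : ℝ) (m : Measure ℝ) : Prop :=
  ∀ n : ℕ, 1 ≤ n → ∀ A : Set ℝ, MeasurableSet A → A ⊆ Wint lam n →
    m (Flam lam '' A) = ENNReal.ofReal (Real.exp p * slopeW lam n ^ t) * m A

/-- A set is wandering for `F_lam` if its preimages under all iterates are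
pairwise disjoint. -/
def IsWanderingSet (lam : ℝ) (A : Set ℝ) : Prop :=
  Pairwise fun i j : ℕ => Disjoint ((Flam lam)^[i] ⁻¹' A) ((Flam lam)^[j] ⁻¹' A)

/-!
Write `q = lam ^ t`. Conformality says that `F⁻¹` pulls mass back from
`F (W (i + 1)) = ⋃ j ≥ i - 1, W (j + 1)` to `W (i + 1)` with the factor `1 - q` (for `i = 0`) or
`q (1 - q)` (for `i ≥ 1`). Starting from the mass `(1 - q) m(A)` that `F⁻¹ A` puts on `W 1`, the
masses of `F^{-n} A` on the intervals `W (i + 1)` therefore dominate the distribution `g n` of a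
killed random walk on `ℕ`. The weight `h i = (1 - q)⁻¹ ^ i` is harmonic for this walk, so
`∑ h g n = 1`, while the first moment `∑ i h g n` equals
`(1 - q)² / q * ∑_{k<n} S k - (1 - 2q) / q * n`, where `S k = ∑ g k` is the surviving mass.
If `∑ S k` converged then, as `q ≤ 1/2`, the first moment would stay bounded; by Markov's inequality
half of the `h`-weighted mass would stay in a fixed window of states, which bounds `S n` from
below and contradicts `S n → 0`. So `∑ m(F^{-n} A) = ∞`, impossible for the disjoint preimages of
a wandering set.
-/

lemma measurable_of_eqOn_cover {α β ι : Type*} [MeasurableSpace α] [MeasurableSpace β]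
    [Countable ι] {f : α → β} {t : ι → Set α} {g : ι → α → β} (htm : ∀ i, MeasurableSet (t i))
    (hg : ∀ i, Measurable (g i)) (hfg : ∀ i, EqOn f (g i) (t i)) (hcover : ∀ x, ∃ i, x ∈ t i) :
    Measurable f := by
  intro s hs
  have hpre : f ⁻¹' s = ⋃ i, t i ∩ g i ⁻¹' s := by
    ext x
    simp only [mem_preimage, mem_iUnion, mem_inter_iff]
    constructor
    · intro hx
      obtain ⟨i, hi⟩ := hcover x
      exact ⟨i, hi, hfg i hi ▸ hx⟩
    · rintro ⟨i, hi, hx⟩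
      rwa [hfg i hi]
  rw [hpre]
  exact .iUnion fun i => (htm i).inter (hg i hs)

section Dynamics

variable {lam : ℝ}

lemma mem_Wint_succ_iff {i : ℕ} {x : ℝ} : x ∈ Wint lam (i + 1) ↔ lam ^ (i + 1) < x ∧ x ≤ lam ^ i :=
  Iff.rfl

lemma Wint_succ_subset_Ioc_pow (h1 : 0 < lam) (h2 : lam < 1) {i j : ℕ} (hij : i ≤ j) :
    Wint lam (j + 1) ⊆ Ioc 0 (lam ^ i) :=
  fun _ hx => ⟨(pow_pos h1 _).trans hx.1, hx.2.trans (pow_le_pow_of_le_one h1.le h2.le hij)⟩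

lemma Wint_succ_subset_Ioc (h1 : 0 < lam) (h2 : lam < 1) (i : ℕ) : Wint lam (i + 1) ⊆ Ioc 0 1 :=
  pow_zero lam ▸ Wint_succ_subset_Ioc_pow h1 h2 i.zero_le

lemma sInf_pow_lt_eq_succ_iff (h1 : 0 < lam) (h2 : lam < 1) {i : ℕ} {x : ℝ} :
    sInf {n : ℕ | lam ^ n < x} = i + 1 ↔ x ∈ Wint lam (i + 1) := by
  rw [Nat.sInf_upward_closed_eq_succ_iff (s := {n : ℕ | lam ^ n < x})
    (fun k₁ k₂ hk hk₁ => (pow_le_pow_of_le_one h1.le h2.le hk).trans_lt hk₁)]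
  simp [mem_Wint_succ_iff]

lemma exists_mem_Wint_succ (h1 : 0 < lam) (h2 : lam < 1) {x : ℝ} (hx : x ∈ Ioc 0 1) :
    ∃ i, x ∈ Wint lam (i + 1) := by
  have hne : {n : ℕ | lam ^ n < x}.Nonempty := exists_pow_lt_of_lt_one hx.1 h2
  have hpos : sInf {n : ℕ | lam ^ n < x} ≠ 0 := fun h0 => by
    have hmem : lam ^ sInf {n : ℕ | lam ^ n < x} < x := Nat.sInf_mem hne
    rw [h0, pow_zero] at hmem
    exact hx.2.not_gt hmem
  obtain ⟨i, hi⟩ := Nat.exists_eq_add_one.2 (Nat.pos_of_ne_zero hpos)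
  exact ⟨i, (sInf_pow_lt_eq_succ_iff h1 h2).1 hi⟩

lemma pairwise_disjoint_Wint_succ (h1 : 0 < lam) (h2 : lam < 1) :
    Pairwise fun i j => Disjoint (Wint lam (i + 1)) (Wint lam (j + 1)) := fun _ _ hij =>
  disjoint_left.2 fun _ hi hj => hij <| Nat.succ_injective <|
    ((sInf_pow_lt_eq_succ_iff h1 h2).2 hi).symm.trans ((sInf_pow_lt_eq_succ_iff h1 h2).2 hj)

lemma Flam_eq_of_mem_Wint (h1 : 0 < lam) (h2 : lam < 1) {i : ℕ} {x : ℝ}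
    (hx : x ∈ Wint lam (i + 1)) : Flam lam x = slopeW lam (i + 1) * (x - lam ^ (i + 1)) := by
  have hx01 := Wint_succ_subset_Ioc h1 h2 i hx
  rw [Flam, if_pos (show 0 < x ∧ x ≤ 1 from hx01), (sInf_pow_lt_eq_succ_iff h1 h2).2 hx, slopeW]
  split_ifs with hi
  · rw [hi, pow_one]; ring
  · ring

lemma Flam_of_notMem {x : ℝ} (hx : x ∉ Ioc 0 1) : Flam lam x = x :=
  if_neg hx

lemma slopeW_mul_sub_pow (h1 : 0 < lam) (h2 : lam < 1) (i : ℕ) :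
    slopeW lam (i + 1) * (lam ^ i - lam ^ (i + 1)) = lam ^ (i - 1) := by
  have h1l : 1 - lam ≠ 0 := sub_ne_zero.2 h2.ne'
  rcases i with _ | i
  · rw [slopeW, if_pos rfl, zero_add, pow_zero, pow_one]
    exact one_div_mul_cancel h1l
  · simp only [slopeW, Nat.add_eq_right, if_neg (Nat.succ_ne_zero _), Nat.add_sub_cancel]
    field_simp
    ring

lemma image_Flam_Wint_succ (h1 : 0 < lam) (h2 : lam < 1) (i : ℕ) :
    Flam lam '' Wint lam (i + 1) = Ioc 0 (lam ^ (i - 1)) := by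
  have hs : 0 < slopeW lam (i + 1) := by
    unfold slopeW; split_ifs <;> have := sub_pos.2 h2 <;> positivity
  have haff : EqOn (Flam lam)
      (slopeW lam (i + 1) * · + -(slopeW lam (i + 1) * lam ^ (i + 1))) (Wint lam (i + 1)) :=
    fun x hx => by rw [Flam_eq_of_mem_Wint h1 h2 hx]; ring
  rw [haff.image_eq, Wint, Nat.add_sub_cancel, image_affine_Ioc hs, ← slopeW_mul_sub_pow h1 h2]
  congr 1 <;> ring

lemma measurable_Flam (h1 : 0 < lam) (h2 : lam < 1) : Measurable (Flam lam) := by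
  refine measurable_of_eqOn_cover (t := fun o : Option ℕ => o.elim (Ioc 0 1)ᶜ
      fun i => Wint lam (i + 1))
    (g := fun o => o.elim id fun i x => slopeW lam (i + 1) * (x - lam ^ (i + 1)))
    (fun o => ?_) (fun o => ?_) (fun o => ?_) (fun x => ?_)
  · cases o <;> simp [Wint, measurableSet_Ioc]
  · cases o
    · exact measurable_id
    · exact (measurable_id.sub_const _).const_mul _
  · cases o with
    | none => exact fun x hx => Flam_of_notMem hx
    | some i => exact fun x hx => Flam_eq_of_mem_Wint h1 h2 hx
  · by_cases hx : x ∈ Ioc 0 1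
    · obtain ⟨i, hi⟩ := exists_mem_Wint_succ h1 h2 hx
      exact ⟨some i, hi⟩
    · exact ⟨none, hx⟩

lemma sum_measureReal_inter_Wint_le (h1 : 0 < lam) (h2 : lam < 1) (m : Measure ℝ)
    [IsFiniteMeasure m] {B : Set ℝ} (hB : MeasurableSet B) {s : Finset ℕ} {T : Set ℝ}
    (hT : ∀ j ∈ s, Wint lam (j + 1) ⊆ T) :
    ∑ j ∈ s, m.real (B ∩ Wint lam (j + 1)) ≤ m.real (B ∩ T) := by
  rw [← measureReal_biUnion_finset (fun i _ j _ hij => (pairwise_disjoint_Wint_succ h1 h2 hij).mono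
    inter_subset_right inter_subset_right) fun j _ => hB.inter measurableSet_Ioc]
  exact measureReal_mono (iUnion₂_subset fun j hj => inter_subset_inter_right B (hT j hj))

end Dynamics

noncomputable def branchWeight (q : ℝ) (i : ℕ) : ℝ := if i = 0 then 1 - q else q * (1 - q)

/-- State `i` stands for the interval `W (i + 1)`. For `i = 0` the truncated `i - 1` is `0`, so
states `0` and `1` both collect from every state, as `F (W 1) = F (W 2) = (0, 1]`. -/
noncomputable def chainMass (q : ℝ) : ℕ → ℕ → ℝ
  | 0, i => if i = 0 then 1 else 0
  | n + 1, i => branchWeight q i * ∑ j ∈ Finset.Icc (i - 1) n, chainMass q n j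

noncomputable def totalChainMass (q : ℝ) (n : ℕ) : ℝ := ∑ i ∈ Finset.range (n + 1), chainMass q n i

section ChainMass

open Finset

variable {q : ℝ}

lemma branchWeight_pos (hq0 : 0 < q) (hq1 : q < 1) (i : ℕ) : 0 < branchWeight q i := by
  have := sub_pos.2 hq1
  unfold branchWeight; split_ifs <;> positivity

lemma chainMass_nonneg (hq0 : 0 < q) (hq1 : q < 1) (n i : ℕ) : 0 ≤ chainMass q n i := by
  induction n generalizing i with
  | zero => unfold chainMass; split_ifs <;> norm_num
  | succ n ih => exact mul_nonneg (branchWeight_pos hq0 hq1 i).le (sum_nonneg fun j _ => ih j)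

lemma totalChainMass_nonneg (hq0 : 0 < q) (hq1 : q < 1) (n : ℕ) : 0 ≤ totalChainMass q n :=
  sum_nonneg fun i _ => chainMass_nonneg hq0 hq1 n i

lemma sum_mul_chainMass_succ (w : ℕ → ℝ) (n : ℕ) :
    ∑ i ∈ range (n + 2), w i * chainMass q (n + 1) i =
      ∑ j ∈ range (n + 1), (∑ i ∈ range (j + 2), branchWeight q i * w i) * chainMass q n j := by
  simp only [chainMass, mul_sum, sum_mul]
  rw [sum_comm' (t' := range (n + 1)) (s' := fun j => range (j + 2))
    (fun i j => by simp only [Finset.mem_range, Finset.mem_Icc]; omega)]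
  exact sum_congr rfl fun j _ => sum_congr rfl fun i _ => by ring

lemma sum_branchWeight_mul_inv_pow (hq : q ≠ 1) (j : ℕ) :
    ∑ i ∈ range (j + 2), branchWeight q i * (1 - q)⁻¹ ^ i = (1 - q)⁻¹ ^ j := by
  have h1q : 1 - q ≠ 0 := sub_ne_zero.2 hq.symm
  induction j with
  | zero =>
    simp only [sum_range_succ, range_zero, sum_empty, branchWeight, if_pos, if_neg one_ne_zero,
      zero_add, pow_zero, pow_one, mul_one]
    field_simp
    ring
  | succ j ih =>
    rw [sum_range_succ, ih]
    simp only [branchWeight, if_neg (Nat.succ_ne_zero _), inv_pow]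
    field_simp
    ring

lemma sum_branchWeight_mul_mul_inv_pow (hq0 : q ≠ 0) (hq1 : q ≠ 1) (j : ℕ) :
    ∑ i ∈ range (j + 2), branchWeight q i * (i * (1 - q)⁻¹ ^ i) =
      j * (1 - q)⁻¹ ^ j - (1 - 2 * q) / q * (1 - q)⁻¹ ^ j + (1 - q) ^ 2 / q := by
  have h1q : 1 - q ≠ 0 := sub_ne_zero.2 hq1.symm
  induction j with
  | zero =>
    simp only [sum_range_succ, range_zero, sum_empty, branchWeight, if_pos, if_neg one_ne_zero,
      zero_add, pow_zero, pow_one, Nat.cast_zero, Nat.cast_one, mul_zero, one_mul, mul_one]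
    field_simp
    ring
  | succ j ih =>
    rw [sum_range_succ, ih]
    simp only [branchWeight, if_neg (Nat.succ_ne_zero _), inv_pow]
    push_cast
    field_simp
    ring

lemma sum_inv_pow_mul_chainMass (hq : q ≠ 1) (n : ℕ) :
    ∑ i ∈ range (n + 1), (1 - q)⁻¹ ^ i * chainMass q n i = 1 := by
  induction n with
  | zero => simp [chainMass]
  | succ n ih =>
    rw [sum_mul_chainMass_succ]
    simp only [sum_branchWeight_mul_inv_pow hq]
    exact ih

lemma sum_mul_inv_pow_mul_chainMass (hq0 : q ≠ 0) (hq1 : q ≠ 1) (n : ℕ) :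
    ∑ i ∈ range (n + 1), (i * (1 - q)⁻¹ ^ i) * chainMass q n i =
      (1 - q) ^ 2 / q * ∑ k ∈ range n, totalChainMass q k - (1 - 2 * q) / q * n := by
  induction n with
  | zero => simp
  | succ n ih =>
    have hexpand : ∀ j : ℕ, (j * (1 - q)⁻¹ ^ j - (1 - 2 * q) / q * (1 - q)⁻¹ ^ j + (1 - q) ^ 2 / q)
        * chainMass q n j = (j * (1 - q)⁻¹ ^ j) * chainMass q n j
          - (1 - 2 * q) / q * ((1 - q)⁻¹ ^ j * chainMass q n j)
          + (1 - q) ^ 2 / q * chainMass q n j := fun j => by ring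
    rw [sum_mul_chainMass_succ]
    simp only [sum_branchWeight_mul_mul_inv_pow hq0 hq1, hexpand, sum_add_distrib,
      sum_sub_distrib, ← mul_sum]
    rw [ih, sum_inv_pow_mul_chainMass hq1, sum_range_succ (totalChainMass q)]
    unfold totalChainMass
    push_cast
    ring

lemma half_le_sum_filter_le_of_sum_mul_le {s : Finset ℕ} {a : ℕ → ℝ} {C : ℝ} {K : ℕ}
    (ha : ∀ i ∈ s, 0 ≤ a i) (hsum : ∑ i ∈ s, a i = 1) (hC : ∑ i ∈ s, i * a i ≤ C)
    (hK : 2 * C ≤ K + 1) : 1 / 2 ≤ ∑ i ∈ s with i ≤ K, a i := by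
  have htail : (K + 1) * ∑ i ∈ s with ¬i ≤ K, a i ≤ C :=
    calc (K + 1) * ∑ i ∈ s with ¬i ≤ K, a i
        = ∑ i ∈ s with ¬i ≤ K, (K + 1 : ℝ) * a i := mul_sum _ _ _
      _ ≤ ∑ i ∈ s with ¬i ≤ K, i * a i := by
        refine sum_le_sum fun i hi => ?_
        rw [mem_filter, not_le] at hi
        gcongr
        · exact ha i hi.1
        · exact_mod_cast hi.2
      _ ≤ ∑ i ∈ s, i * a i :=
        sum_le_sum_of_subset_of_nonneg (filter_subset _ _) fun i hi _ =>
          mul_nonneg i.cast_nonneg (ha i hi)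
      _ ≤ C := hC
  have hsplit := sum_filter_add_sum_filter_not s (· ≤ K) a
  have hK0 : (0 : ℝ) < K + 1 := by positivity
  nlinarith

lemma pow_div_two_le_totalChainMass (hq0 : 0 < q) (hq1 : q < 1) {C : ℝ} {n : ℕ}
    (hC : ∑ i ∈ range (n + 1), (i * (1 - q)⁻¹ ^ i) * chainMass q n i ≤ C) :
    (1 - q) ^ ⌈2 * C⌉₊ / 2 ≤ totalChainMass q n := by
  set K := ⌈2 * C⌉₊
  have h1q : 0 < 1 - q := sub_pos.2 hq1
  have hg := chainMass_nonneg hq0 hq1 n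
  have hhalf : 1 / 2 ≤ ∑ i ∈ range (n + 1) with i ≤ K, (1 - q)⁻¹ ^ i * chainMass q n i := by
    refine half_le_sum_filter_le_of_sum_mul_le (fun i _ => by have := hg i; positivity)
      (sum_inv_pow_mul_chainMass hq1.ne n) ?_ (by linarith [Nat.le_ceil (2 * C)])
    simpa only [mul_assoc] using hC
  calc (1 - q) ^ K / 2
      ≤ (1 - q) ^ K * ∑ i ∈ range (n + 1) with i ≤ K, (1 - q)⁻¹ ^ i * chainMass q n i := by
        rw [div_eq_mul_one_div]; gcongr
    _ ≤ ∑ i ∈ range (n + 1) with i ≤ K, chainMass q n i := by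
        rw [mul_sum]
        refine sum_le_sum fun i hi => ?_
        have hpow : (1 - q) ^ K * (1 - q)⁻¹ ^ i ≤ 1 := by
          rw [inv_pow, ← pow_sub₀ _ h1q.ne' (mem_filter.1 hi).2]
          exact pow_le_one₀ h1q.le (by linarith)
        rw [← mul_assoc]
        exact mul_le_of_le_one_left (hg i) hpow
    _ ≤ totalChainMass q n :=
        sum_le_sum_of_subset_of_nonneg (filter_subset _ _) fun i _ _ => hg i

theorem not_summable_totalChainMass (hq0 : 0 < q) (hq : q ≤ 1 / 2) :
    ¬Summable (totalChainMass q) := by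
  intro hS
  have hq1 : q < 1 := by linarith
  set C := (1 - q) ^ 2 / q * ∑' n, totalChainMass q n
  have hmoment : ∀ n, ∑ i ∈ range (n + 1), (i * (1 - q)⁻¹ ^ i) * chainMass q n i ≤ C := by
    intro n
    rw [sum_mul_inv_pow_mul_chainMass hq0.ne' hq1.ne]
    have hpartial : ∑ k ∈ range n, totalChainMass q k ≤ ∑' k, totalChainMass q k :=
      hS.sum_le_tsum _ fun k _ => totalChainMass_nonneg hq0 hq1 k
    have hdrift : 0 ≤ (1 - 2 * q) / q * n := by
      have : 0 ≤ 1 - 2 * q := by linarith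
      positivity
    have hscaled : (1 - q) ^ 2 / q * ∑ k ∈ range n, totalChainMass q k ≤ C :=
      mul_le_mul_of_nonneg_left hpartial (by positivity)
    linarith
  have hpos : 0 < (1 - q) ^ ⌈2 * C⌉₊ / 2 := by have := sub_pos.2 hq1; positivity
  obtain ⟨n, hn⟩ := (hS.tendsto_atTop_zero.eventually (gt_mem_nhds hpos)).exists
  exact (pow_div_two_le_totalChainMass hq0 hq1 (hmoment n)).not_gt hn

end ChainMass

section Conformal

variable {lam t : ℝ}

lemma exp_log_mul_slopeW_rpow (h1 : 0 < lam) (h2 : lam < 1) (ht : 0 < t) (i : ℕ) :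
    Real.exp (Real.log ((1 - lam) ^ t / (1 - lam ^ t))) * slopeW lam (i + 1) ^ t =
      (branchWeight (lam ^ t) i)⁻¹ := by
  have h1l : 0 < 1 - lam := sub_pos.2 h2
  have hq : 0 < 1 - lam ^ t := sub_pos.2 (Real.rpow_lt_one h1.le h2 ht)
  have hql : 0 < lam ^ t := Real.rpow_pos_of_pos h1 t
  rw [Real.exp_log (by positivity)]
  simp only [slopeW, branchWeight, Nat.add_eq_right]
  split_ifs
  · rw [one_div, Real.inv_rpow h1l.le]
    field_simp
  · rw [one_div, Real.inv_rpow (by positivity), Real.mul_rpow h1.le h1l.le]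
    field_simp

lemma measureReal_preimage_Flam_inter_Wint (h1 : 0 < lam) (h2 : lam < 1) (ht : 0 < t)
    {m : Measure ℝ} (hconf : IsConformal lam t (Real.log ((1 - lam) ^ t / (1 - lam ^ t))) m)
    {B : Set ℝ} (hB : MeasurableSet B) (i : ℕ) :
    m.real (Flam lam ⁻¹' B ∩ Wint lam (i + 1)) =
      branchWeight (lam ^ t) i * m.real (B ∩ Ioc 0 (lam ^ (i - 1))) := by
  have hγ := branchWeight_pos (Real.rpow_pos_of_pos h1 t) (Real.rpow_lt_one h1.le h2 ht) i
  have hconf_i : m (Flam lam '' (Flam lam ⁻¹' B ∩ Wint lam (i + 1))) =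
      ENNReal.ofReal (branchWeight (lam ^ t) i)⁻¹ * m (Flam lam ⁻¹' B ∩ Wint lam (i + 1)) := by
    rw [← exp_log_mul_slopeW_rpow h1 h2 ht]
    exact hconf (i + 1) i.succ_pos _ ((measurable_Flam h1 h2 hB).inter measurableSet_Ioc)
      inter_subset_right
  rw [image_preimage_inter, image_Flam_Wint_succ h1 h2] at hconf_i
  rw [measureReal_def, measureReal_def, hconf_i, ENNReal.toReal_mul,
    ENNReal.toReal_ofReal (inv_nonneg.2 hγ.le), ← mul_assoc, mul_inv_cancel₀ hγ.ne', one_mul]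

variable {m : Measure ℝ} [IsFiniteMeasure m]

lemma chainMass_mul_le_measureReal (h1 : 0 < lam) (h2 : lam < 1) (ht : 0 < t)
    (hconf : IsConformal lam t (Real.log ((1 - lam) ^ t / (1 - lam ^ t))) m)
    {B : Set ℝ} (hB : MeasurableSet B) {ε : ℝ} (hε : ε ≤ m.real (B ∩ Wint lam 1)) (n i : ℕ) :
    chainMass (lam ^ t) n i * ε ≤ m.real ((Flam lam)^[n] ⁻¹' B ∩ Wint lam (i + 1)) := by
  induction n generalizing i with
  | zero =>
    rcases i with _ | i
    · simpa [chainMass] using hε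
    · simp [chainMass]
  | succ n ih =>
    have hγ := branchWeight_pos (Real.rpow_pos_of_pos h1 t) (Real.rpow_lt_one h1.le h2 ht) i
    have hBn : MeasurableSet ((Flam lam)^[n] ⁻¹' B) := (measurable_Flam h1 h2).iterate n hB
    calc chainMass (lam ^ t) (n + 1) i * ε
        = branchWeight (lam ^ t) i * ∑ j ∈ Finset.Icc (i - 1) n, chainMass (lam ^ t) n j * ε := by
          rw [chainMass, mul_assoc, Finset.sum_mul]
      _ ≤ branchWeight (lam ^ t) i *
            ∑ j ∈ Finset.Icc (i - 1) n, m.real ((Flam lam)^[n] ⁻¹' B ∩ Wint lam (j + 1)) :=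
          mul_le_mul_of_nonneg_left (Finset.sum_le_sum fun j _ => ih j) hγ.le
      _ ≤ branchWeight (lam ^ t) i * m.real ((Flam lam)^[n] ⁻¹' B ∩ Ioc 0 (lam ^ (i - 1))) :=
          mul_le_mul_of_nonneg_left (sum_measureReal_inter_Wint_le h1 h2 m hBn fun j hj =>
            Wint_succ_subset_Ioc_pow h1 h2 (Finset.mem_Icc.1 hj).1) hγ.le
      _ = m.real ((Flam lam)^[n + 1] ⁻¹' B ∩ Wint lam (i + 1)) := by
          rw [Function.iterate_succ, preimage_comp,
            measureReal_preimage_Flam_inter_Wint h1 h2 ht hconf hBn]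

lemma totalChainMass_mul_le_measureReal (h1 : 0 < lam) (h2 : lam < 1) (ht : 0 < t)
    (hconf : IsConformal lam t (Real.log ((1 - lam) ^ t / (1 - lam ^ t))) m)
    {B : Set ℝ} (hB : MeasurableSet B) {ε : ℝ} (hε : ε ≤ m.real (B ∩ Wint lam 1)) (n : ℕ) :
    totalChainMass (lam ^ t) n * ε ≤ m.real ((Flam lam)^[n] ⁻¹' B) :=
  calc totalChainMass (lam ^ t) n * ε
      = ∑ i ∈ Finset.range (n + 1), chainMass (lam ^ t) n i * ε := Finset.sum_mul _ _ _
    _ ≤ ∑ i ∈ Finset.range (n + 1), m.real ((Flam lam)^[n] ⁻¹' B ∩ Wint lam (i + 1)) :=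
        Finset.sum_le_sum fun i _ => chainMass_mul_le_measureReal h1 h2 ht hconf hB hε n i
    _ ≤ m.real ((Flam lam)^[n] ⁻¹' B ∩ univ) :=
        sum_measureReal_inter_Wint_le h1 h2 m ((measurable_Flam h1 h2).iterate n hB)
          fun _ _ => subset_univ _
    _ = m.real ((Flam lam)^[n] ⁻¹' B) := by rw [inter_univ]

end Conformal

theorem stmt7_general (lam t : ℝ) (h1 : 0 < lam) (h2 : lam < 1) (ht : 0 < t)
    (hl : lam ^ t ≤ 1/2)
    (m : Measure ℝ) (hm : IsProbabilityMeasure m)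
    (hconf : IsConformal lam t (Real.log ((1-lam)^t / (1 - lam^t))) m) :
    ∀ A : Set ℝ, MeasurableSet A → A ⊆ Set.Ioc 0 1 → IsWanderingSet lam A →
      m A = 0 := by
  intro A hA hA01 hW
  by_contra hA0
  have hq0 : 0 < lam ^ t := Real.rpow_pos_of_pos h1 t
  have hq1 : lam ^ t < 1 := Real.rpow_lt_one h1.le h2 ht
  set ε := (1 - lam ^ t) * m.real A
  have hε : 0 < ε := mul_pos (sub_pos.2 hq1) (ENNReal.toReal_pos hA0 (measure_ne_top m A))
  have hbase : ε ≤ m.real (Flam lam ⁻¹' A ∩ Wint lam 1) := by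
    rw [measureReal_preimage_Flam_inter_Wint h1 h2 ht hconf hA 0, pow_zero, inter_eq_left.2 hA01,
      branchWeight, if_pos rfl]
  have hsummable : Summable fun n => m.real ((Flam lam)^[n + 1] ⁻¹' A) :=
    summable_measure_toReal (fun n => (measurable_Flam h1 h2).iterate _ hA)
      fun i j hij => hW (by omega)
  refine not_summable_totalChainMass hq0 hl <| (hsummable.div_const ε).of_nonneg_of_le
    (totalChainMass_nonneg hq0 hq1) fun n => ?_
  rw [le_div_iff₀ hε, Function.iterate_succ', preimage_comp]
  exact totalChainMass_mul_le_measureReal h1 h2 ht hconf (measurable_Flam h1 h2 hA) hbase n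

/-- For `lam^t ≤ 1/2`, the `(t, log ψ(t))`-conformal probability measure
with `m(W k) = (1-lam^t) lam^(t(k-1))` is conservative: every wandering Borel set has
`m`-measure zero. -/
theorem stmt7 (lam t : ℝ) (h1 : 0 < lam) (h2 : lam < 1) (ht : 0 < t)
    (hl : lam ^ t ≤ 1/2)
    (m : Measure ℝ) (hm : IsProbabilityMeasure m) (hm1 : m (Set.Ioc 0 1) = 1)
    (hconf : IsConformal lam t (Real.log ((1-lam)^t / (1 - lam^t))) m)
    (hmass : ∀ k : ℕ, 1 ≤ k → m (Wint lam k) =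
      ENNReal.ofReal ((1 - lam^t) * lam ^ (t * ((k:ℝ) - 1)))) :
    ∀ A : Set ℝ, MeasurableSet A → A ⊆ Set.Ioc 0 1 → IsWanderingSet lam A →
      m A = 0 :=
  stmt7_general lam t h1 h2 ht hl m hm hconf
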